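/- There exists a constant C > 0 such that for all 0 < ε < 1/8, the unique solution ū_ε of the Dirichlet problem satisfies ∫_{B₁(0)} exp(−2·ū_ε(x)) dx ≤ π + C·ε⁻¹. -/

import Mathlib

open Real Set Metric

/-- The Euclidean Laplacian of `u : ℝ² → ℝ`. -/
noncomputable def laplacian2 (u : EuclideanSpace ℝ (Fin 2) → ℝ)
    (x : EuclideanSpace ℝ (Fin 2)) : ℝ :=
  ∑ i : Fin 2,
    fderiv ℝ (fun y => fderiv ℝ u y (EuclideanSpace.single i 1)) x (EuclideanSpace.single i 1)

/-- `u` is a solution of the Dirichlet problem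
`Δu = ε⁻²·(exp u − |x|²·exp (−u))` in `B₁(0)`, `u = 0` on `∂B₁(0)`. -/
def IsDirichletSol (ε : ℝ) (u : EuclideanSpace ℝ (Fin 2) → ℝ) : Prop :=
  ContinuousOn u (closedBall 0 1) ∧
  ContDiffOn ℝ (⊤ : ℕ∞) u (ball 0 1) ∧
  (∀ x ∈ ball (0 : EuclideanSpace ℝ (Fin 2)) 1,
    laplacian2 u x = (ε ^ 2)⁻¹ * (Real.exp (u x) - ‖x‖ ^ 2 * Real.exp (-u x))) ∧
  (∀ x ∈ sphere (0 : EuclideanSpace ℝ (Fin 2)) 1, u x = 0)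


open Filter Topology

set_option maxHeartbeats 1000000

noncomputable section
namespace Stmt13

abbrev E2 := EuclideanSpace ℝ (Fin 2)

def Q (x : E2) : ℝ := x 0 * x 0 + x 1 * x 1

lemma Q_nonneg (x : E2) : 0 ≤ Q x := by
  have := mul_self_nonneg (x 0); have := mul_self_nonneg (x 1); unfold Q; linarith

lemma normSq_eq (x : E2) : ‖x‖ ^ 2 = Q x := by
  rw [EuclideanSpace.norm_eq, Real.sq_sqrt (by positivity)]
  simp [Q, Fin.sum_univ_two, pow_two]

def DQ (x : E2) : E2 →L[ℝ] ℝ :=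
  (2 * x 0) • (EuclideanSpace.proj 0 : E2 →L[ℝ] ℝ) +
  (2 * x 1) • (EuclideanSpace.proj 1 : E2 →L[ℝ] ℝ)

lemma hasFDerivAt_Q (x : E2) : HasFDerivAt Q (DQ x) x := by
  have h0 : HasFDerivAt (fun y : E2 => y 0) (EuclideanSpace.proj 0 : E2 →L[ℝ] ℝ) x :=
    (EuclideanSpace.proj (0 : Fin 2) : E2 →L[ℝ] ℝ).hasFDerivAt
  have h1 : HasFDerivAt (fun y : E2 => y 1) (EuclideanSpace.proj 1 : E2 →L[ℝ] ℝ) x :=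
    (EuclideanSpace.proj (1 : Fin 2) : E2 →L[ℝ] ℝ).hasFDerivAt
  have := (h0.mul h0).add (h1.mul h1)
  refine this.congr_fderiv ?_
  unfold DQ; ext y; simp [two_mul, mul_comm]; ring

lemma DQ_single (x : E2) (i : Fin 2) :
    DQ x (EuclideanSpace.single i 1) = 2 * x i := by
  have : DQ x (EuclideanSpace.single i 1) =
      2 * x 0 * (EuclideanSpace.single i (1:ℝ)) 0 + 2 * x 1 * (EuclideanSpace.single i (1:ℝ)) 1 := by
    simp [DQ]
  rw [this]
  fin_cases i <;> simp [EuclideanSpace.single_apply]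

def psi (δ : ℝ) (x : E2) : ℝ :=
  (1/2) * Real.log (Q x + δ) + Q x - (1 + (1/2) * Real.log (1 + δ))

lemma continuous_Q : Continuous Q := by
  unfold Q; fun_prop

lemma continuous_psi {δ : ℝ} (hδ : 0 < δ) : Continuous (psi δ) := by
  unfold psi
  have h : ∀ x : E2, Q x + δ ≠ 0 := fun x => by have := Q_nonneg x; positivity
  have hq : Continuous Q := continuous_Q
  exact ((continuous_const.mul ((hq.add continuous_const).log h)).add hq).sub continuous_const

def Dpsi (δ : ℝ) (x : E2) : E2 →L[ℝ] ℝ := (1/2 : ℝ) • ((Q x + δ)⁻¹ • DQ x) + DQ x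

lemma hasFDerivAt_psi {δ : ℝ} (hδ : 0 < δ) (x : E2) :
    HasFDerivAt (psi δ) (Dpsi δ x) x := by
  have hQx : Q x + δ ≠ 0 := by have := Q_nonneg x; positivity
  have h1 : HasFDerivAt (fun y => Q y + δ) (DQ x) x := (hasFDerivAt_Q x).add_const δ
  have h2 := (h1.log hQx).const_mul (1/2 : ℝ)
  exact (h2.add (hasFDerivAt_Q x)).sub_const _

def F (δ : ℝ) (i : Fin 2) (y : E2) : ℝ := ((Q y + δ)⁻¹ + 2) * y i

lemma Dpsi_single (δ : ℝ) (x : E2) (i : Fin 2) :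
    Dpsi δ x (EuclideanSpace.single i 1) = F δ i x := by
  have := DQ_single x i
  simp only [Dpsi, ContinuousLinearMap.add_apply, ContinuousLinearMap.coe_smul', Pi.smul_apply,
    smul_eq_mul, this, F]
  ring

def DF (δ : ℝ) (i : Fin 2) (x : E2) : E2 →L[ℝ] ℝ :=
  ((Q x + δ)⁻¹ + 2) • (EuclideanSpace.proj i : E2 →L[ℝ] ℝ) +
    x i • ((-((Q x + δ) ^ 2)⁻¹) • DQ x)

lemma hasFDerivAt_F {δ : ℝ} (hδ : 0 < δ) (i : Fin 2) (x : E2) :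
    HasFDerivAt (F δ i) (DF δ i x) x := by
  have hQx : Q x + δ ≠ 0 := by have := Q_nonneg x; positivity
  have h1 : HasFDerivAt (fun y => (Q y + δ)⁻¹ + 2) ((-((Q x + δ) ^ 2)⁻¹) • DQ x) x := by
    have h0 := (hasDerivAt_inv hQx).comp_hasFDerivAt x ((hasFDerivAt_Q x).add_const δ)
    have := h0.add_const (2:ℝ)
    exact this
  have h2 : HasFDerivAt (fun y : E2 => y i) (EuclideanSpace.proj i : E2 →L[ℝ] ℝ) x :=
    (EuclideanSpace.proj i : E2 →L[ℝ] ℝ).hasFDerivAt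
  exact h1.mul h2

lemma DF_single (δ : ℝ) (i : Fin 2) (x : E2) :
    DF δ i x (EuclideanSpace.single i 1)
      = ((Q x + δ)⁻¹ + 2) - ((Q x + δ) ^ 2)⁻¹ * (2 * x i * x i) := by
  have h1 : (EuclideanSpace.proj i : E2 →L[ℝ] ℝ) (EuclideanSpace.single i 1) = 1 := by
    simp [EuclideanSpace.single_apply]
  have h2 := DQ_single x i
  simp only [DF, ContinuousLinearMap.add_apply, ContinuousLinearMap.coe_smul', Pi.smul_apply,
    smul_eq_mul, h1, h2]
  ring

/-- If `g` is differentiable near `0` with derivative `g'`, `g'` is differentiable at `0`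
with derivative `A`, and `g` has a local min at `0`, then `0 ≤ A`. -/
lemma second_deriv_nonneg_of_isLocalMin {g g' : ℝ → ℝ} {A r : ℝ} (hr : 0 < r)
    (hg : ∀ t ∈ Ioo (-r) r, HasDerivAt g (g' t) t) (hg' : HasDerivAt g' A 0)
    (hmin : IsLocalMin g 0) : 0 ≤ A := by
  by_contra hA
  push_neg at hA
  have h0mem : (0:ℝ) ∈ Ioo (-r) r := by constructor <;> linarith
  have hg'0 : g' 0 = 0 := by
    have h1 : deriv g 0 = 0 := hmin.deriv_eq_zero
    rwa [(hg 0 h0mem).deriv] at h1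
  -- slope of g' tends to A < 0
  have hslope : Tendsto (slope g' 0) (𝓝[≠] 0) (𝓝 A) :=
    hasDerivAt_iff_tendsto_slope.mp hg'
  have hev : ∀ᶠ t in 𝓝[>] (0:ℝ), slope g' 0 t < 0 := by
    have h1 : ∀ᶠ t in 𝓝[≠] (0:ℝ), slope g' 0 t < 0 := hslope.eventually_lt_const hA
    exact nhdsWithin_mono 0 (fun t (ht : t ∈ Ioi (0:ℝ)) => ne_of_gt ht) h1
  obtain ⟨t₂, ht₂, hIoc⟩ := (nhdsGT_basis_of_exists_gt (⟨1, by norm_num⟩ : ∃ b, (0:ℝ) < b)).eventually_iff.mp hev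
  obtain ⟨η, hη, hball⟩ := Metric.eventually_nhds_iff.mp hmin
  set t₁ : ℝ := min (min (t₂/2) (η/2)) (r/2) with ht₁def
  have ht₁pos : 0 < t₁ := by positivity
  have ht₁r : t₁ < r := by
    have : t₁ ≤ r/2 := min_le_right _ _
    linarith
  have ht₁t₂ : t₁ < t₂ := by
    have h := (min_le_left (min (t₂/2) (η/2)) (r/2)).trans (min_le_left _ _)
    have : t₁ ≤ t₂/2 := le_trans (min_le_left _ _) (min_le_left _ _)
    linarith
  have ht₁η : t₁ < η := by
    have : t₁ ≤ η/2 := le_trans (min_le_left _ _) (min_le_right _ _)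
    linarith
  -- g' is negative on (0, t₁]
  have hneg : ∀ t ∈ Ioo (0:ℝ) t₁, deriv g t < 0 := by
    intro t ht
    have hmem : t ∈ Ioo (0:ℝ) t₂ := ⟨ht.1, lt_trans ht.2 ht₁t₂⟩
    have hs := hIoc hmem
    have : slope g' 0 t = g' t / t := by
      rw [slope_def_field, hg'0]; ring
    rw [this] at hs
    have hgt : g' t < 0 := by
      by_contra hge
      push_neg at hge
      exact absurd hs (not_lt.mpr (div_nonneg hge ht.1.le))
    have htmem : t ∈ Ioo (-r) r := by
      constructor
      · linarith [ht.1]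
      · exact lt_trans ht.2 ht₁r
    rw [(hg t htmem).deriv]; exact hgt
  have hcont : ContinuousOn g (Icc 0 t₁) := by
    intro t ht
    have htmem : t ∈ Ioo (-r) r := by
      constructor
      · linarith [ht.1]
      · exact lt_of_le_of_lt ht.2 ht₁r
    exact ((hg t htmem).continuousAt).continuousWithinAt
  have hanti : StrictAntiOn g (Icc 0 t₁) := by
    apply strictAntiOn_of_deriv_neg (convex_Icc 0 t₁) hcont
    intro t ht
    rw [interior_Icc] at ht
    exact hneg t ht
  have h1 : g t₁ < g 0 :=
    hanti (left_mem_Icc.mpr ht₁pos.le) (right_mem_Icc.mpr ht₁pos.le) ht₁pos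
  have h2 : g 0 ≤ g t₁ := by
    apply hball
    simp [abs_of_pos ht₁pos, ht₁η, Real.dist_eq]
  linarith

/-- The subsolution inequality for the barrier. -/
lemma key_ineq {ε t : ℝ} (hε : 0 < ε) (hε8 : ε < 1/8) (ht : 0 ≤ t) (ht1 : t ≤ 1) :
    (ε^2)⁻¹ * (Real.exp ((1/2) * Real.log (t + ε^2) + t - (1 + (1/2) * Real.log (1 + ε^2)))
      - t * Real.exp (-((1/2) * Real.log (t + ε^2) + t - (1 + (1/2) * Real.log (1 + ε^2)))))
    ≤ 2 * ε^2 / (t + ε^2)^2 + 4 := by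
  have hδ : 0 < ε^2 := by positivity
  have hδ64 : ε^2 < 1/64 := by nlinarith
  set p : ℝ := (1/2) * Real.log (t + ε^2) + t - (1 + (1/2) * Real.log (1 + ε^2)) with hpdef
  set a : ℝ := Real.exp p with hadef
  have ha : 0 < a := Real.exp_pos p
  have hP : 0 < t + ε^2 := by linarith
  have hS : 0 < 1 + ε^2 := by linarith
  have hasq : a^2 * (1 + ε^2) = (t + ε^2) * Real.exp (2*t - 2) := by
    have h1 : a^2 = Real.exp (2*p) := by
      rw [hadef, sq, ← Real.exp_add, two_mul]
    have h2 : Real.exp (2*p) * Real.exp (Real.log (1+ε^2))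
        = Real.exp (Real.log (t+ε^2)) * Real.exp (2*t-2) := by
      rw [← Real.exp_add, ← Real.exp_add, hpdef]; ring_nf
    rw [Real.exp_log hP, Real.exp_log hS] at h2
    rw [h1]; exact h2
  have hexpneg : Real.exp (-p) = a⁻¹ := by rw [Real.exp_neg]
  rw [hexpneg]
  have hgoal : (ε^2)⁻¹ * (a - t * a⁻¹) = ((ε^2)⁻¹ * (a^2 - t))/a := by
    field_simp
  rw [hgoal, div_le_iff₀ ha]
  have hEpos : 0 < Real.exp (2*t-2) := Real.exp_pos _
  have hRpos : 0 < 2 * ε^2 / (t + ε^2)^2 + 4 := by positivity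
  rcases le_or_gt (ε^2/2) t with hcase | hcase
  · -- outer region : a^2 ≤ t
    have hexplo : 3 - 2*t ≤ Real.exp (2 - 2*t) := by
      have := Real.add_one_le_exp (2 - 2*t); linarith
    have hEinv : Real.exp (2*t-2) = (Real.exp (2-2*t))⁻¹ := by
      rw [← Real.exp_neg]; ring_nf
    have hexppos : (0:ℝ) < 3 - 2*t := by linarith
    have hkey : (t + ε^2) ≤ t * (1 + ε^2) * (3 - 2*t) := by
      nlinarith [mul_nonneg (by linarith : (0:ℝ) ≤ 1 - t)
        (by nlinarith [mul_nonneg ht (le_of_lt hδ)] : (0:ℝ) ≤ 2*t - ε^2 + 2*t*ε^2)]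
    have hasq_le : a^2 ≤ t := by
      have h1 : a^2 * (1 + ε^2) * Real.exp (2-2*t) = (t + ε^2) := by
        rw [hasq, hEinv]
        field_simp
      have h2 : a^2 * (1 + ε^2) * (3 - 2*t) ≤ a^2 * (1 + ε^2) * Real.exp (2-2*t) := by
        apply mul_le_mul_of_nonneg_left hexplo (by positivity)
      nlinarith [Real.exp_pos (2-2*t)]
    have hL : (ε^2)⁻¹ * (a^2 - t) ≤ 0 := by
      apply mul_nonpos_of_nonneg_of_nonpos (by positivity)
      linarith
    nlinarith
  · -- inner region
    have he1 : ((27/10 : ℝ):ℝ) < Real.exp 1 :=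
      lt_trans (by norm_num) Real.exp_one_gt_d9
    have he2 : Real.exp 1 < (68/25 : ℝ) :=
      lt_trans Real.exp_one_lt_d9 (by norm_num)
    have hEup : Real.exp (2*t-2) ≤ (Real.exp 1)⁻¹ := by
      rw [← Real.exp_neg]
      apply Real.exp_le_exp.mpr; nlinarith
    have hElo : (Real.exp 1 * Real.exp 1)⁻¹ ≤ Real.exp (2*t-2) := by
      rw [← Real.exp_add, ← Real.exp_neg]
      apply Real.exp_le_exp.mpr; nlinarith
    have hepos : (0:ℝ) < Real.exp 1 := Real.exp_pos 1
    -- upper bound on a^2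
    have hasq_up : a^2 ≤ (5/9) * ε^2 := by
      have h1 : a^2 * (1+ε^2) ≤ (3/2*ε^2) * (Real.exp 1)⁻¹ := by
        rw [hasq]
        apply mul_le_mul (by linarith) hEup (le_of_lt hEpos) (by linarith)
      have h2 : (Real.exp 1)⁻¹ ≤ (10/27 : ℝ) := by
        rw [inv_le_iff_one_le_mul₀' hepos]
        · nlinarith
      nlinarith [sq_nonneg a, sq_nonneg ε]
    -- lower bound on a
    have hasq_lo : ε^2 / (74/5 : ℝ) ≤ a^2 := by
      have h1 : ε^2 * (Real.exp 1 * Real.exp 1)⁻¹ ≤ (t+ε^2) * Real.exp (2*t-2) := by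
        apply mul_le_mul (by linarith) hElo (by positivity) (le_of_lt hP)
      have h2 : (Real.exp 1 * Real.exp 1)⁻¹ ≥ 5/37 := by
        rw [ge_iff_le, div_le_iff₀ (by positivity)]
        rw [inv_mul_eq_div, le_div_iff₀ (by positivity)]
        nlinarith
      have h3 : ε^2 * (5/37) ≤ ε^2 * ((Real.exp 1 * Real.exp 1)⁻¹) :=
        mul_le_mul_of_nonneg_left h2 (by positivity)
      have h6 : ε^2 * (5/37) ≤ a^2 * (1+ε^2) := by rw [hasq]; exact le_trans h3 h1
      nlinarith [h6, mul_le_mul_of_nonneg_left (le_of_lt hδ64) (sq_nonneg a)]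
    have ha_lo : ε/(77/20 : ℝ) ≤ a := by
      by_contra hc
      push_neg at hc
      have h4 : a^2 < (ε/(77/20 : ℝ))^2 := by nlinarith
      have h5 : (ε/(77/20 : ℝ))^2 < ε^2/(74/5 : ℝ) := by nlinarith
      linarith
    -- conclude
    have hL : (ε^2)⁻¹ * (a^2 - t) ≤ 5/9 := by
      have : a^2 - t ≤ (5/9)*ε^2 := by linarith
      calc (ε^2)⁻¹ * (a^2 - t) ≤ (ε^2)⁻¹ * ((5/9)*ε^2) :=
            mul_le_mul_of_nonneg_left this (by positivity)
        _ = 5/9 := by field_simp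
    have hPle : (t+ε^2)^2 ≤ (3/2*ε^2)^2 := by nlinarith
    have hfrac : 8/(9*ε^2) ≤ 2*ε^2/(t+ε^2)^2 := by
      rw [div_le_div_iff₀ (by positivity) (by positivity)]
      nlinarith
    have hR : 8/(9*ε^2) * (ε/(77/20 : ℝ)) ≤ (2*ε^2/(t+ε^2)^2 + 4) * a := by
      apply mul_le_mul (by linarith) ha_lo (by positivity) (by positivity)
    have hRval : 8/(9*ε^2) * (ε/(77/20 : ℝ)) = 8/(9*(77/20 : ℝ)*ε) := by
      field_simp
    have hfinal : (5/9 : ℝ) ≤ 8/(9*(77/20 : ℝ)*ε) := by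
      rw [div_le_div_iff₀ (by norm_num) (by positivity)]
      nlinarith
    linarith [hRval ▸ hR]


lemma psi_le_u {ε : ℝ} (hε : 0 < ε) (hε8 : ε < 1/8) {u : E2 → ℝ} (hu : IsDirichletSol ε u) :
    ∀ x ∈ closedBall (0:E2) 1, psi (ε^2) x ≤ u x := by
  obtain ⟨hucont, husmooth, hupde, hubd⟩ := hu
  have hδ : (0:ℝ) < ε^2 := by positivity
  set w : E2 → ℝ := fun x => u x - psi (ε^2) x with hwdef
  have hwcont : ContinuousOn w (closedBall (0:E2) 1) :=
    hucont.sub ((continuous_psi hδ).continuousOn)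
  obtain ⟨x₀, hx₀mem, hx₀min⟩ := (isCompact_closedBall (0:E2) 1).exists_isMinOn
      (nonempty_closedBall.mpr zero_le_one) hwcont
  suffices h : 0 ≤ w x₀ by
    intro x hx
    have h2 : u x₀ - psi (ε^2) x₀ ≤ u x - psi (ε^2) x := hx₀min hx
    have h3 : 0 ≤ u x₀ - psi (ε^2) x₀ := h
    linarith
  by_contra hneg
  push_neg at hneg
  -- psi vanishes on the unit sphere
  have hpsi_sphere : ∀ y : E2, ‖y‖ = 1 → psi (ε^2) y = 0 := by
    intro y hy
    have hQ : Q y = 1 := by rw [← normSq_eq, hy]; norm_num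
    simp only [psi, hQ]
    ring
  -- the minimum point is interior
  have hx₀ball : x₀ ∈ ball (0:E2) 1 := by
    have h1 : ‖x₀‖ ≤ 1 := by simpa [mem_closedBall, dist_eq_norm] using hx₀mem
    rcases lt_or_eq_of_le h1 with h2 | h2
    · simpa [mem_ball, dist_eq_norm] using h2
    · exfalso
      have hw0 : w x₀ = 0 := by
        have hu0 : u x₀ = 0 := hubd x₀ (by simpa [mem_sphere_iff_norm] using h2)
        simp [hwdef, hu0, hpsi_sphere x₀ h2]
      linarith
  have hnhds : ball (0:E2) 1 ∈ 𝓝 x₀ := isOpen_ball.mem_nhds hx₀ball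
  have hlocal : IsLocalMin w x₀ :=
    hx₀min.isLocalMin (Filter.mem_of_superset hnhds ball_subset_closedBall)
  obtain ⟨ρ, hρpos, hρsub⟩ := Metric.isOpen_iff.mp isOpen_ball x₀ hx₀ball
  -- key : for each direction, second derivative of u dominates that of psi
  have hkey : ∀ i : Fin 2,
      DF (ε^2) i x₀ (EuclideanSpace.single i 1)
        ≤ fderiv ℝ (fun y => fderiv ℝ u y (EuclideanSpace.single i 1)) x₀
            (EuclideanSpace.single i 1) := by
    intro i
    set e : E2 := EuclideanSpace.single i 1 with hedef
    have he : ‖e‖ = 1 := by rw [hedef, EuclideanSpace.norm_single]; norm_num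
    set L : ℝ → E2 := fun s => x₀ + s • e with hLdef
    have hL0 : L 0 = x₀ := by simp [hLdef]
    have hLmem : ∀ t : ℝ, t ∈ Ioo (-ρ) ρ → L t ∈ ball (0:E2) 1 := by
      intro t ht
      apply hρsub
      have : dist (L t) x₀ = |t| := by
        simp [hLdef, dist_eq_norm, norm_smul, he, abs_eq_self.mpr]
      rw [mem_ball, this]
      rcases ht with ⟨h1, h2⟩
      rw [abs_lt]; exact ⟨h1, h2⟩
    have hline : ∀ t : ℝ, HasDerivAt L e t := by
      intro t
      simpa [hLdef] using (((hasDerivAt_id t).smul_const e).const_add x₀)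
    set g : ℝ → ℝ := fun s => u (L s) - psi (ε^2) (L s) with hgdef
    set g' : ℝ → ℝ := fun s => fderiv ℝ u (L s) e - F (ε^2) i (L s) with hg'def
    have hg : ∀ t ∈ Ioo (-ρ) ρ, HasDerivAt g (g' t) t := by
      intro t ht
      have hudiff : DifferentiableAt ℝ u (L t) :=
        (husmooth.contDiffAt (isOpen_ball.mem_nhds (hLmem t ht))).differentiableAt (by simp)
      have h1 : HasDerivAt (fun s => u (L s)) (fderiv ℝ u (L t) e) t :=
        (hudiff.hasFDerivAt).comp_hasDerivAt t (hline t)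
      have h2 : HasDerivAt (fun s => psi (ε^2) (L s)) (F (ε^2) i (L t)) t := by
        have := (hasFDerivAt_psi hδ (L t)).comp_hasDerivAt t (hline t)
        rwa [Dpsi_single] at this
      exact h1.sub h2
    have hg' : HasDerivAt g'
        (fderiv ℝ (fun y => fderiv ℝ u y e) x₀ e - DF (ε^2) i x₀ e) 0 := by
      have hu2 : ContDiffAt ℝ 2 u x₀ := (husmooth.contDiffAt hnhds).of_le (WithTop.coe_le_coe.mpr le_top)
      have hfd : ContDiffAt ℝ 1 (fderiv ℝ u) x₀ := hu2.fderiv_right (by norm_num)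
      have hG : DifferentiableAt ℝ (fun y => fderiv ℝ u y e) x₀ :=
        (hfd.differentiableAt one_ne_zero).clm_apply (differentiableAt_const e)
      have hGL : HasFDerivAt (fun y => fderiv ℝ u y e)
          (fderiv ℝ (fun y => fderiv ℝ u y e) x₀) (L 0) := by
        rw [hL0]; exact hG.hasFDerivAt
      have h1 : HasDerivAt (fun s => fderiv ℝ u (L s) e)
          (fderiv ℝ (fun y => fderiv ℝ u y e) x₀ e) 0 :=
        hGL.comp_hasDerivAt 0 (hline 0)
      have hFL : HasFDerivAt (F (ε^2) i) (DF (ε^2) i x₀) (L 0) := by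
        rw [hL0]; exact hasFDerivAt_F hδ i x₀
      have h2 : HasDerivAt (fun s => F (ε^2) i (L s)) (DF (ε^2) i x₀ e) 0 :=
        hFL.comp_hasDerivAt 0 (hline 0)
      exact h1.sub h2
    have hming : IsLocalMin g 0 := by
      have hcontL : ContinuousAt L 0 := by
        apply ContinuousAt.add continuousAt_const
        exact (continuous_id.smul continuous_const).continuousAt
      have hlocal' := hlocal
      rw [← hL0] at hlocal'
      have := hlocal'.comp_continuous hcontL
      exact this
    have := second_deriv_nonneg_of_isLocalMin hρpos hg hg' hming
    linarith
  -- sum the directional inequalities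
  have hlap : laplacian2 (fun y => u y) x₀ = laplacian2 u x₀ := rfl
  have hsum : 2 * ε^2 / (Q x₀ + ε^2)^2 + 4 ≤ laplacian2 u x₀ := by
    have h0 := hkey 0
    have h1 := hkey 1
    rw [DF_single] at h0 h1
    unfold laplacian2
    rw [Fin.sum_univ_two]
    have hQx : Q x₀ + ε^2 ≠ 0 := by have := Q_nonneg x₀; positivity
    have hid : 2 * ε^2 / (Q x₀ + ε^2)^2 + 4
        = (((Q x₀ + ε^2)⁻¹ + 2) - ((Q x₀ + ε^2)^2)⁻¹ * (2 * x₀ 0 * x₀ 0))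
          + (((Q x₀ + ε^2)⁻¹ + 2) - ((Q x₀ + ε^2)^2)⁻¹ * (2 * x₀ 1 * x₀ 1)) := by
      have hQdef : Q x₀ = x₀ 0 * x₀ 0 + x₀ 1 * x₀ 1 := rfl
      rw [hQdef] at hQx ⊢
      field_simp
      ring
    linarith [h0, h1, hid.le]
  -- now get the contradiction from the PDE and the key inequality
  have ht0 : 0 ≤ Q x₀ := Q_nonneg x₀
  have ht1 : Q x₀ ≤ 1 := by
    have : ‖x₀‖ < 1 := by simpa [mem_ball, dist_eq_norm] using hx₀ball
    nlinarith [normSq_eq x₀, norm_nonneg x₀]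
  have hki := key_ineq hε hε8 ht0 ht1
  have hpde := hupde x₀ hx₀ball
  rw [normSq_eq] at hpde
  -- monotonicity : u x₀ < psi x₀
  have hulp : u x₀ < psi (ε^2) x₀ := by
    simp only [hwdef] at hneg; linarith
  have hmono : Real.exp (u x₀) - Q x₀ * Real.exp (-u x₀)
      < Real.exp (psi (ε^2) x₀) - Q x₀ * Real.exp (-(psi (ε^2) x₀)) := by
    have h1 : Real.exp (u x₀) < Real.exp (psi (ε^2) x₀) := Real.exp_lt_exp.mpr hulp
    have h2 : Real.exp (-(psi (ε^2) x₀)) ≤ Real.exp (-u x₀) :=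
      Real.exp_le_exp.mpr (by linarith)
    nlinarith [mul_le_mul_of_nonneg_left h2 ht0]
  have hpsival : psi (ε^2) x₀
      = (1/2) * Real.log (Q x₀ + ε^2) + Q x₀ - (1 + (1/2) * Real.log (1 + ε^2)) := rfl
  rw [hpsival] at hmono
  have hlt : laplacian2 u x₀ < 2 * ε^2 / (Q x₀ + ε^2)^2 + 4 := by
    rw [hpde]
    calc (ε^2)⁻¹ * (Real.exp (u x₀) - Q x₀ * Real.exp (-u x₀))
        < (ε^2)⁻¹ * (Real.exp ((1/2) * Real.log (Q x₀ + ε^2) + Q x₀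
            - (1 + (1/2) * Real.log (1 + ε^2)))
          - Q x₀ * Real.exp (-((1/2) * Real.log (Q x₀ + ε^2) + Q x₀
            - (1 + (1/2) * Real.log (1 + ε^2))))) := by
          apply mul_lt_mul_of_pos_left hmono (by positivity)
      _ ≤ 2 * ε^2 / (Q x₀ + ε^2)^2 + 4 := hki
  linarith


lemma inv_le_sum {ε : ℝ} (hε : 0 < ε) (x : E2) (hx : x ∈ ball (0:E2) 1) :
    (Q x + ε^2)⁻¹ ≤ ∑ k ∈ Finset.range (⌈ε⁻¹⌉₊ + 1),
      Set.indicator (closedBall (0:E2) ((2:ℝ)^k)⁻¹) (fun _ => (4:ℝ)^(k+1)) x := by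
  classical
  set K := ⌈ε⁻¹⌉₊ with hKdef
  have hδ : (0:ℝ) < ε^2 := by positivity
  have hnorm : ‖x‖ < 1 := by simpa [mem_ball, dist_eq_norm] using hx
  have hterm_nonneg : ∀ k ∈ Finset.range (K+1),
      0 ≤ Set.indicator (closedBall (0:E2) ((2:ℝ)^k)⁻¹) (fun _ => (4:ℝ)^(k+1)) x := by
    intro k _
    apply Set.indicator_nonneg
    intro _ _
    positivity
  have h2K : ε⁻¹ ≤ (2:ℝ)^K := by
    have h1 : ε⁻¹ ≤ (K:ℝ) := Nat.le_ceil _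
    have h2 : (K:ℝ) < (2:ℝ)^K := by
      have := Nat.lt_two_pow_self (n := K)
      exact_mod_cast this
    linarith
  by_cases hcase : ‖x‖ ≤ ((2:ℝ)^K)⁻¹
  · have hmem : x ∈ closedBall (0:E2) ((2:ℝ)^K)⁻¹ := by
      simpa [mem_closedBall, dist_eq_norm] using hcase
    have hQinv : (Q x + ε^2)⁻¹ ≤ (ε^2)⁻¹ := by
      apply inv_anti₀ hδ
      linarith [Q_nonneg x]
    have h4K : (ε^2)⁻¹ ≤ (4:ℝ)^(K+1) := by
      have h1 : (ε⁻¹)^2 ≤ ((2:ℝ)^K)^2 := by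
        apply pow_le_pow_left₀ (by positivity) h2K
      have h2 : ((2:ℝ)^K)^2 = (4:ℝ)^K := by
        rw [← pow_mul, pow_mul']
        norm_num
      have h3 : (4:ℝ)^K ≤ (4:ℝ)^(K+1) := by
        apply pow_le_pow_right₀ (by norm_num)
        omega
      have h4 : (ε^2)⁻¹ = (ε⁻¹)^2 := by
        rw [inv_pow]
      linarith [h4 ▸ le_refl ((ε^2)⁻¹), h1, h2 ▸ h1]
    have hsingle : (4:ℝ)^(K+1)
        ≤ ∑ k ∈ Finset.range (K+1),
          Set.indicator (closedBall (0:E2) ((2:ℝ)^k)⁻¹) (fun _ => (4:ℝ)^(k+1)) x := by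
      have hmem2 : K ∈ Finset.range (K+1) := by simp
      have hval : Set.indicator (closedBall (0:E2) ((2:ℝ)^K)⁻¹) (fun _ => (4:ℝ)^(K+1)) x
          = (4:ℝ)^(K+1) := Set.indicator_of_mem hmem _
      calc (4:ℝ)^(K+1) = _ := hval.symm
        _ ≤ _ := Finset.single_le_sum hterm_nonneg hmem2
    calc (Q x + ε^2)⁻¹ ≤ (ε^2)⁻¹ := hQinv
      _ ≤ (4:ℝ)^(K+1) := h4K
      _ ≤ _ := hsingle
  · set P : ℕ → Prop := fun j => ‖x‖ ≤ ((2:ℝ)^j)⁻¹ with hPdef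
    have hP0 : P 0 := by simpa [hPdef] using hnorm.le
    set j := Nat.findGreatest P K with hjdef
    have hPj : P j := Nat.findGreatest_spec (Nat.zero_le K) hP0
    have hjK : j ≤ K := Nat.findGreatest_le K
    have hjlt : j < K := by
      rcases lt_or_eq_of_le hjK with h | h
      · exact h
      · exact absurd (h ▸ hPj) hcase
    have hnot : ¬ P (j+1) := by
      apply Nat.findGreatest_is_greatest
      · rw [← hjdef]; omega
      · omega
    have h1 : ((2:ℝ)^(j+1))⁻¹ < ‖x‖ := not_le.mp hnot
    have h2 : ((4:ℝ)^(j+1))⁻¹ < Q x := by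
      have hq := normSq_eq x
      have h2pos : (0:ℝ) < ((2:ℝ)^(j+1))⁻¹ := by positivity
      have h3 : (((2:ℝ)^(j+1))⁻¹)^2 < ‖x‖^2 := by
        apply pow_lt_pow_left₀ h1 h2pos.le
        norm_num
      have h4 : (((2:ℝ)^(j+1))⁻¹)^2 = ((4:ℝ)^(j+1))⁻¹ := by
        rw [inv_pow, ← pow_mul, mul_comm, pow_mul]
        norm_num
      rw [← hq, ← h4]
      exact h3
    have hQle : (Q x + ε^2)⁻¹ ≤ (4:ℝ)^(j+1) := by
      have hQpos : (0:ℝ) < Q x + ε^2 := by have := Q_nonneg x; linarith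
      rw [inv_le_comm₀ hQpos (by positivity)]
      · calc ((4:ℝ)^(j+1))⁻¹ ≤ Q x := h2.le
          _ ≤ Q x + ε^2 := by linarith
    have hmem : x ∈ closedBall (0:E2) ((2:ℝ)^j)⁻¹ := by
      simpa [mem_closedBall, dist_eq_norm] using hPj
    have hval : Set.indicator (closedBall (0:E2) ((2:ℝ)^j)⁻¹) (fun _ => (4:ℝ)^(j+1)) x
        = (4:ℝ)^(j+1) := Set.indicator_of_mem hmem _
    calc (Q x + ε^2)⁻¹ ≤ (4:ℝ)^(j+1) := hQle
      _ = _ := hval.symm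
      _ ≤ _ := Finset.single_le_sum hterm_nonneg (by simp; omega)


lemma exp_neg_two_psi_le {ε : ℝ} (hε : 0 < ε) (hε8 : ε < 1/8) (x : E2) :
    Real.exp (-2 * psi (ε^2) x) ≤ 2 * Real.exp 2 * (Q x + ε^2)⁻¹ := by
  have hQ0 := Q_nonneg x
  have hP : (0:ℝ) < Q x + ε^2 := by positivity
  have hS : (0:ℝ) < 1 + ε^2 := by positivity
  have h1 : Real.exp (-2 * psi (ε^2) x)
      = (1+ε^2) * Real.exp (2 - 2*Q x) * (Q x+ε^2)⁻¹ := by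
    have h0 : -2 * psi (ε^2) x
        = Real.log (1+ε^2) + (2 - 2*Q x) + (-(Real.log (Q x+ε^2))) := by
      unfold psi; ring
    rw [h0, Real.exp_add, Real.exp_add, Real.exp_neg, Real.exp_log hS, Real.exp_log hP]
  rw [h1]
  apply mul_le_mul_of_nonneg_right _ (by positivity)
  have hE : Real.exp (2 - 2*Q x) ≤ Real.exp 2 := Real.exp_le_exp.mpr (by linarith)
  have hδ1 : ε^2 ≤ 1 := by nlinarith
  nlinarith [Real.exp_pos (2 - 2*Q x), Real.exp_pos 2]

end Stmt13

open Stmt13 MeasureTheory in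
/-- there is a constant `C > 0` such that for all `0 < ε < 1/8` the unique
solution `ū_ε` of the Dirichlet problem satisfies
`∫_{B₁(0)} exp(−2·ū_ε(x)) dx ≤ π + C·ε⁻¹`. -/
theorem stmt_13 :
    ∃ C > (0 : ℝ), ∀ ε : ℝ, 0 < ε → ε < 1/8 →
      ∀ u : EuclideanSpace ℝ (Fin 2) → ℝ, IsDirichletSol ε u →
        ∫ x in ball (0 : EuclideanSpace ℝ (Fin 2)) 1, Real.exp (-2 * u x) ≤ π + C * ε⁻¹ := by
  classical
  set B : ℝ := (volume (ball (0:E2) 1)).toReal with hBdef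
  have hB : 0 ≤ B := ENNReal.toReal_nonneg
  refine ⟨24 * Real.exp 2 * B + 1, by positivity, ?_⟩
  intro ε hε hε8 u hu
  set K := ⌈ε⁻¹⌉₊ with hKdef
  have hpsi := psi_le_u hε hε8 hu
  obtain ⟨hucont, -, -, -⟩ := hu
  set G : E2 → ℝ := fun x => ∑ k ∈ Finset.range (K+1),
      Set.indicator (closedBall (0:E2) ((2:ℝ)^k)⁻¹)
        (fun _ => 2*Real.exp 2*(4:ℝ)^(k+1)) x with hGdef
  have hGint : Integrable G := by
    apply integrable_finset_sum
    intro k _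
    rw [integrable_indicator_iff measurableSet_closedBall]
    exact integrableOn_const measure_closedBall_lt_top.ne
  have hGsplit : ∀ x : E2, G x = 2*Real.exp 2 * ∑ k ∈ Finset.range (K+1),
      Set.indicator (closedBall (0:E2) ((2:ℝ)^k)⁻¹) (fun _ => (4:ℝ)^(k+1)) x := by
    intro x
    simp only [hGdef, Finset.mul_sum]
    apply Finset.sum_congr rfl
    intro k _
    rw [Set.indicator_apply, Set.indicator_apply]
    split <;> simp
  have hpt : ∀ x ∈ ball (0:E2) 1, Real.exp (-2*u x) ≤ G x := by
    intro x hx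
    have h1 : psi (ε^2) x ≤ u x := hpsi x (ball_subset_closedBall hx)
    have h2 : Real.exp (-2*u x) ≤ Real.exp (-2*psi (ε^2) x) :=
      Real.exp_le_exp.mpr (by linarith)
    have h3 := exp_neg_two_psi_le hε hε8 x
    have h4 := inv_le_sum hε x hx
    have h5 := mul_le_mul_of_nonneg_left h4 (by positivity : (0:ℝ) ≤ 2*Real.exp 2)
    rw [hGsplit x]
    calc Real.exp (-2*u x) ≤ Real.exp (-2*psi (ε^2) x) := h2
      _ ≤ 2 * Real.exp 2 * (Q x + ε^2)⁻¹ := h3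
      _ ≤ _ := h5
  have hfcont : ContinuousOn (fun x : E2 => Real.exp (-2*u x)) (closedBall (0:E2) 1) :=
    Real.continuous_exp.comp_continuousOn (continuousOn_const.mul hucont)
  have hfint : IntegrableOn (fun x : E2 => Real.exp (-2*u x)) (ball (0:E2) 1) volume :=
    (hfcont.integrableOn_compact (isCompact_closedBall _ _)).mono_set ball_subset_closedBall
  have hmono := setIntegral_mono_on hfint (hGint.integrableOn) measurableSet_ball hpt
  have hGnonneg : 0 ≤ᵐ[volume] G := by
    apply Filter.Eventually.of_forall
    intro x
    apply Finset.sum_nonneg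
    intro k _
    apply Set.indicator_nonneg
    intro _ _
    positivity
  have h6 : ∫ x in ball (0:E2) 1, G x ≤ ∫ x, G x := setIntegral_le_integral hGint hGnonneg
  have hvol : ∀ k : ℕ, (volume (closedBall (0:E2) ((2:ℝ)^k)⁻¹)).toReal
      = (((2:ℝ)^k)⁻¹)^2 * B := by
    intro k
    rw [Measure.addHaar_closedBall volume (0:E2) (by positivity : (0:ℝ) ≤ ((2:ℝ)^k)⁻¹)]
    rw [ENNReal.toReal_mul, ENNReal.toReal_ofReal (by positivity)]
    congr 2
    rw [finrank_euclideanSpace_fin]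
  have h7 : ∫ x, G x = ((K:ℝ)+1) * (8 * Real.exp 2 * B) := by
    rw [hGdef]
    rw [integral_finset_sum _ (fun k _ => by
      rw [integrable_indicator_iff measurableSet_closedBall]
      exact integrableOn_const measure_closedBall_lt_top.ne)]
    have hterm : ∀ k ∈ Finset.range (K+1),
        (∫ x : E2, Set.indicator (closedBall (0:E2) ((2:ℝ)^k)⁻¹)
          (fun _ => 2*Real.exp 2*(4:ℝ)^(k+1)) x) = 8 * Real.exp 2 * B := by
      intro k _
      rw [integral_indicator_const _ measurableSet_closedBall, measureReal_def, hvol k]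
      have hpow : (((2:ℝ)^k)⁻¹)^2 * (4:ℝ)^(k+1) = 4 := by
        have h1 : (((2:ℝ)^k)⁻¹)^2 = ((4:ℝ)^k)⁻¹ := by
          rw [inv_pow, ← pow_mul, mul_comm, pow_mul]
          norm_num
        rw [h1, pow_succ]
        field_simp
      calc ((((2:ℝ)^k)⁻¹)^2 * B) • (2*Real.exp 2*(4:ℝ)^(k+1))
          = ((((2:ℝ)^k)⁻¹)^2 * (4:ℝ)^(k+1)) * (2 * Real.exp 2) * B := by
            rw [smul_eq_mul]; ring
        _ = 8 * Real.exp 2 * B := by rw [hpow]; ring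
    rw [Finset.sum_congr rfl hterm, Finset.sum_const, Finset.card_range]
    push_cast
    ring
  have hKbound : ((K:ℝ)+1) ≤ 3 * ε⁻¹ := by
    have hinv : (8:ℝ) ≤ ε⁻¹ := by
      rw [show (8:ℝ) = ((8:ℝ)⁻¹)⁻¹ by norm_num]
      apply inv_anti₀ hε
      linarith
    have hceil : (K:ℝ) < ε⁻¹ + 1 := by
      rw [hKdef]
      exact Nat.ceil_lt_add_one (by positivity)
    linarith
  have hfinal : ∫ x in ball (0:E2) 1, Real.exp (-2*u x) ≤ 24 * Real.exp 2 * B * ε⁻¹ := by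
    have h8 : ((K:ℝ)+1) * (8 * Real.exp 2 * B) ≤ 3 * ε⁻¹ * (8 * Real.exp 2 * B) :=
      mul_le_mul_of_nonneg_right hKbound (by positivity)
    calc ∫ x in ball (0:E2) 1, Real.exp (-2*u x) ≤ ∫ x in ball (0:E2) 1, G x := hmono
      _ ≤ ∫ x, G x := h6
      _ = ((K:ℝ)+1) * (8 * Real.exp 2 * B) := h7
      _ ≤ 3 * ε⁻¹ * (8 * Real.exp 2 * B) := h8
      _ = 24 * Real.exp 2 * B * ε⁻¹ := by ring
  have hπ : (0:ℝ) < π := Real.pi_pos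
  have hεinv : (0:ℝ) < ε⁻¹ := by positivity
  calc ∫ x in ball (0:E2) 1, Real.exp (-2*u x) ≤ 24 * Real.exp 2 * B * ε⁻¹ := hfinal
    _ ≤ π + (24 * Real.exp 2 * B + 1) * ε⁻¹ := by nlinarith
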